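/- (Cassels) Let K be a number field with ring of integers O_K, k > 0, T a compact subset of the mixed space E, and ε ∈ O_K^× a unit of infinite order such that |ι(ε)|_j ≠ 1 for every index 1 ≤ j ≤ r₁+r₂. Suppose: (1) there exists β ∈ O_K such that for every ξ ∈ T, either there exists γ ∈ O_K with N(ι(ε)·ξ − ι(β) − ι(γ)) < k, or ι(ε)·ξ − ι(β) ∈ T; and (2) for every ξ ∈ T there exists γ ∈ O_K such that either N(ι(ε)⁻¹·ξ − ι(γ) − ι(δ)) < k for some δ ∈ O_K, or ι(ε)⁻¹·ξ − ι(γ) ∈ T. Then every k-exceptional point of T equals ι(β)/(ι(ε)−1) (the componentwise quotient in E). -/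

import Mathlib

open NumberField NumberField.InfinitePlace

/-!
Let `b = ι β / (ι ε - 1)`, the fixed point of `ξ ↦ ι ε * ξ - ι β`, and let `S` be the set of
translates `ξ - b` of the `k`-exceptional points `ξ` of `T`. Units have norm `1`, so
exceptionality is preserved by `ξ ↦ ι u * ξ - ι a`; hence hypothesis (1) says that
multiplication by `ι ε` maps the bounded set `S` into itself, and every point of `S` vanishes
at the places where `|ε| > 1` (such places exist by the product formula). Hypothesis (2)
makes every point of `S` the `ι ε`-multiple of a point of `S` up to an integral translation;
that translation vanishes at an expanding place, hence is zero. So multiplication by `ι ε`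
maps `S` onto itself, and the points of `S` also vanish at the places where `|ε| < 1`.
-/

open Set Filter NumberField.mixedEmbedding

lemma eq_zero_of_forall_pow_mul_le {r t C : ℝ} (hr : 1 < r) (ht : 0 ≤ t)
    (h : ∀ n : ℕ, r ^ n * t ≤ C) : t = 0 := by
  refine ht.antisymm' (le_of_not_gt fun htpos => ?_)
  obtain ⟨n, hn⟩ := pow_unbounded_of_one_lt (C / t) hr
  exact (h n).not_gt ((div_lt_iff₀ htpos).mp hn)

lemma nonpos_of_forall_le_pow_mul {r t C : ℝ} (hr₀ : 0 ≤ r) (hr : r < 1)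
    (h : ∀ n : ℕ, t ≤ r ^ n * C) : t ≤ 0 := by
  refine ge_of_tendsto' (x := atTop) ?_ h
  simpa using (tendsto_pow_atTop_nhds_zero_of_lt_one hr₀ hr).mul_const C

namespace NumberField

variable {K : Type*} [Field K]

theorem Units.exists_one_lt_apply_of_forall_ne_one [NumberField K] (u : (𝓞 K)ˣ)
    (hu : ∀ w : InfinitePlace K, w u ≠ 1) : ∃ w : InfinitePlace K, 1 < w u := by
  by_contra! hle
  have hlog : ∀ w : InfinitePlace K, (w.mult : ℝ) * Real.log (w u) < 0 := fun w =>
    mul_neg_of_pos_of_neg (by exact_mod_cast mult_pos)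
      (Real.log_neg (Units.pos_at_place u w) ((hle w).lt_of_ne (hu w)))
  have := Finset.sum_lt_sum_of_nonempty Finset.univ_nonempty fun w _ => hlog w
  simp [Units.sum_mult_mul_log] at this

theorem InfinitePlace.apply_ne_one_of_mixedEmbedding {x : K}
    (hx : (∀ w : {w : InfinitePlace K // IsReal w}, |(mixedEmbedding K x).1 w| ≠ 1) ∧
      (∀ w : {w : InfinitePlace K // IsComplex w}, ‖(mixedEmbedding K x).2 w‖ ≠ 1))
    (w : InfinitePlace K) : w x ≠ 1 := by
  rw [← normAtPlace_apply]
  rcases isReal_or_isComplex w with hw | hw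
  · rw [normAtPlace_apply_of_isReal hw, Real.norm_eq_abs]
    exact hx.1 ⟨w, hw⟩
  · rw [normAtPlace_apply_of_isComplex hw]
    exact hx.2 ⟨w, hw⟩

namespace mixedEmbedding

local notation "ι" => mixedEmbedding K

theorem normAtPlace_eq_zero_of_mapsTo_mul {S : Set (mixedSpace K)} {e : mixedSpace K}
    (he : MapsTo (e * ·) S S) {w : InfinitePlace K} (hw : 1 < normAtPlace w e)
    (hS : BddAbove (normAtPlace w '' S)) {x : mixedSpace K} (hx : x ∈ S) :
    normAtPlace w x = 0 := by
  obtain ⟨C, hC⟩ := hS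
  refine eq_zero_of_forall_pow_mul_le (C := C) hw (normAtPlace_nonneg w x) fun n => ?_
  have hmem : e ^ n * x ∈ S := by simpa using he.iterate n hx
  simpa using hC (mem_image_of_mem _ hmem)

theorem normAtPlace_eq_zero_of_surjOn_mul {S : Set (mixedSpace K)} {e : mixedSpace K}
    (he : SurjOn (e * ·) S S) {w : InfinitePlace K} (hw : normAtPlace w e < 1)
    (hS : BddAbove (normAtPlace w '' S)) {x : mixedSpace K} (hx : x ∈ S) :
    normAtPlace w x = 0 := by
  obtain ⟨C, hC⟩ := hS
  refine (nonpos_of_forall_le_pow_mul (C := C) (normAtPlace_nonneg w e) hw fun n => ?_).antisymm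
    (normAtPlace_nonneg w x)
  obtain ⟨y, hy, rfl⟩ : ∃ y ∈ S, e ^ n * y = x := by simpa using he.iterate n hx
  simpa using mul_le_mul_of_nonneg_left (hC (mem_image_of_mem _ hy))
    (pow_nonneg (normAtPlace_nonneg w e) n)

theorem eq_zero_of_eq_mul_add {w : InfinitePlace K} {x y e : mixedSpace K} {m : K}
    (h : x = e * y + ι m) (hx : normAtPlace w x = 0) (hy : normAtPlace w y = 0) : m = 0 := by
  have hle : w m ≤ 0 := calc
    w m = normAtPlace w (x + -(e * y)) := by rw [h, add_neg_cancel_comm, normAtPlace_apply]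
    _ ≤ normAtPlace w x + normAtPlace w (-(e * y)) := normAtPlace_add_le w _ _
    _ = 0 := by rw [normAtPlace_neg, map_mul, hx, hy, mul_zero, add_zero]
  exact (map_eq_zero w).mp (hle.antisymm (apply_nonneg w m))

theorem unit_mul_inv (u : (𝓞 K)ˣ) : ι (u : K) * ι ((u⁻¹ : (𝓞 K)ˣ) : K) = 1 := by
  rw [← map_mul, ← Units.coe_mul, mul_inv_cancel, Units.coe_one, map_one]

variable [NumberField K]

variable (k : ℝ) in
def IsExceptional (ξ : mixedSpace K) : Prop :=
  ∀ γ : 𝓞 K, k ≤ mixedEmbedding.norm (ξ - ι γ)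

theorem IsExceptional.unit_mul_sub {k : ℝ} {ξ : mixedSpace K} (hξ : IsExceptional k ξ)
    (u : (𝓞 K)ˣ) (a : 𝓞 K) : IsExceptional k (ι (u : K) * ξ - ι a) := by
  intro γ
  have hrw : ι (u : K) * ξ - ι a - ι γ = ι (u : K) * (ξ - ι ((u⁻¹ : (𝓞 K)ˣ) * (a + γ) : 𝓞 K)) := by
    push_cast
    simp only [map_mul, map_add]
    linear_combination (ι a + ι γ) * unit_mul_inv u
  rw [hrw, map_mul, norm_unit, one_mul]
  exact hξ _

section Dynamics

variable {k : ℝ} {T : Set (mixedSpace K)} {ε : (𝓞 K)ˣ} {β : 𝓞 K} {b : mixedSpace K}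

theorem mapsTo_mul_image_sub_of_isExceptional (hb : (ι ε - 1) * b = ι β)
    (h1 : ∀ ξ ∈ T, IsExceptional k (ι ε * ξ - ι β) → ι ε * ξ - ι β ∈ T) :
    MapsTo (ι ε * ·) ((· - b) '' {ξ ∈ T | IsExceptional k ξ})
      ((· - b) '' {ξ ∈ T | IsExceptional k ξ}) := by
  rintro _ ⟨ξ, ⟨hξT, hξ⟩, rfl⟩
  have hξ' : IsExceptional k (ι ε * ξ - ι β) := hξ.unit_mul_sub ε β
  refine ⟨ι ε * ξ - ι β, ⟨h1 ξ hξT hξ', hξ'⟩, ?_⟩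
  linear_combination hb

theorem surjOn_mul_image_sub_of_isExceptional (hb : (ι ε - 1) * b = ι β)
    (h2 : ∀ ξ ∈ T, ∃ γ : 𝓞 K, IsExceptional k (ι ((ε⁻¹ : (𝓞 K)ˣ) : K) * ξ - ι γ) →
      ι ((ε⁻¹ : (𝓞 K)ˣ) : K) * ξ - ι γ ∈ T)
    {w : InfinitePlace K}
    (hw : ∀ x ∈ (· - b) '' {ξ ∈ T | IsExceptional k ξ}, normAtPlace w x = 0) :
    SurjOn (ι ε * ·) ((· - b) '' {ξ ∈ T | IsExceptional k ξ})
      ((· - b) '' {ξ ∈ T | IsExceptional k ξ}) := by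
  rintro _ ⟨ξ, ⟨hξT, hξ⟩, rfl⟩
  obtain ⟨γ, hγ⟩ := h2 ξ hξT
  set ξ' := ι ((ε⁻¹ : (𝓞 K)ˣ) : K) * ξ - ι γ
  have hξ' : IsExceptional k ξ' := hξ.unit_mul_sub ε⁻¹ γ
  have hrel : ξ - b = ι ε * (ξ' - b) + ι (β + ε * γ : 𝓞 K) := by
    push_cast
    simp only [map_add, map_mul, ξ']
    linear_combination (-ξ) * unit_mul_inv ε + hb
  have hm : ((β + ε * γ : 𝓞 K) : K) = 0 :=
    eq_zero_of_eq_mul_add hrel (hw _ ⟨ξ, ⟨hξT, hξ⟩, rfl⟩) (hw _ ⟨ξ', ⟨hγ hξ', hξ'⟩, rfl⟩)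
  exact ⟨ξ' - b, ⟨ξ', ⟨hγ hξ', hξ'⟩, rfl⟩, by beta_reduce; rw [hrel, hm, map_zero, add_zero]⟩

end Dynamics

end mixedEmbedding
end NumberField

theorem stmt_3_general (K : Type*) [Field K] [NumberField K]
    (k : ℝ)
    (T : Set (mixedEmbedding.mixedSpace K)) (hT : IsCompact T)
    (ε : (𝓞 K)ˣ)
    (hεabs : (∀ w : {w : InfinitePlace K // IsReal w},
        |(mixedEmbedding K (ε : K)).1 w| ≠ 1) ∧
      (∀ w : {w : InfinitePlace K // IsComplex w},
        ‖(mixedEmbedding K (ε : K)).2 w‖ ≠ 1))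
    (β : 𝓞 K)
    (h1 : ∀ ξ ∈ T,
      (∃ γ : 𝓞 K, mixedEmbedding.norm
          (mixedEmbedding K (ε : K) * ξ - mixedEmbedding K (β : K)
            - mixedEmbedding K (γ : K)) < k) ∨
      mixedEmbedding K (ε : K) * ξ - mixedEmbedding K (β : K) ∈ T)
    (h2 : ∀ ξ ∈ T, ∃ γ : 𝓞 K,
      (∃ δ : 𝓞 K, mixedEmbedding.norm
          (mixedEmbedding K ((ε⁻¹ : (𝓞 K)ˣ) : K) * ξ - mixedEmbedding K (γ : K)
            - mixedEmbedding K (δ : K)) < k) ∨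
      mixedEmbedding K ((ε⁻¹ : (𝓞 K)ˣ) : K) * ξ - mixedEmbedding K (γ : K) ∈ T)
    (ξ₀ : mixedEmbedding.mixedSpace K) (hξ₀ : ξ₀ ∈ T)
    (hexc : ∀ γ : 𝓞 K, k ≤ mixedEmbedding.norm (ξ₀ - mixedEmbedding K (γ : K))) :
    ξ₀ = mixedEmbedding K (β : K) / (mixedEmbedding K (ε : K) - 1) := by
  have hne := InfinitePlace.apply_ne_one_of_mixedEmbedding hεabs
  obtain ⟨w₀, hw₀⟩ := Units.exists_one_lt_apply_of_forall_ne_one ε hne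
  have hε1 : (ε : K) - 1 ≠ 0 := sub_ne_zero.mpr fun h => hw₀.ne' (by rw [h, map_one])
  set b := mixedEmbedding K (β : K) / (mixedEmbedding K (ε : K) - 1)
  have hb : (mixedEmbedding K (ε : K) - 1) * b = mixedEmbedding K (β : K) :=
    IsUnit.mul_div_cancel (by simpa using hε1.isUnit.map (mixedEmbedding K)) _
  set S := (· - b) '' {ξ ∈ T | IsExceptional k ξ}
  have hS (w : InfinitePlace K) : BddAbove (normAtPlace w '' S) :=
    ((hT.image (continuous_sub_right b)).bddAbove_image
      (continuous_normAtPlace w).continuousOn).mono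
      (image_mono (image_mono (sep_subset T _)))
  have hfwd : MapsTo (mixedEmbedding K (ε : K) * ·) S S :=
    mapsTo_mul_image_sub_of_isExceptional hb fun ξ hξ hξexc =>
      (h1 ξ hξ).resolve_left fun ⟨γ, hγ⟩ => (hξexc γ).not_gt hγ
  have hexp (w : InfinitePlace K) (hw : 1 < w ε) : ∀ x ∈ S, normAtPlace w x = 0 :=
    fun _ hx => normAtPlace_eq_zero_of_mapsTo_mul hfwd (by rwa [normAtPlace_apply]) (hS w) hx
  have hbwd : SurjOn (mixedEmbedding K (ε : K) * ·) S S :=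
    surjOn_mul_image_sub_of_isExceptional hb (fun ξ hξ => (h2 ξ hξ).imp fun γ hγ hξexc =>
      hγ.resolve_left fun ⟨δ, hδ⟩ => (hξexc δ).not_gt hδ) (hexp w₀ hw₀)
  have hξ₀S : ξ₀ - b ∈ S := ⟨ξ₀, ⟨hξ₀, hexc⟩, rfl⟩
  rw [← sub_eq_zero, ← forall_normAtPlace_eq_zero_iff]
  intro w
  rcases (hne w).lt_or_gt with hlt | hgt
  · exact normAtPlace_eq_zero_of_surjOn_mul hbwd (by rwa [normAtPlace_apply]) (hS w) hξ₀S
  · exact hexp w hgt _ hξ₀S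

/-- (Cassels) If multiplication by `ι ε` (after translation by `-ι β`) and
multiplication by `ι ε⁻¹` (after a suitable translation) both send every point
of the compact set `T` into a `k`-covered region or back into `T`, and no
archimedean absolute value of `ε` equals `1`, then the only possible
`k`-exceptional point of `T` is `ι β / (ι ε - 1)`. -/
theorem stmt_3 (K : Type*) [Field K] [NumberField K]
    (k : ℝ) (hk : 0 < k)
    (T : Set (mixedEmbedding.mixedSpace K)) (hT : IsCompact T)
    (ε : (𝓞 K)ˣ) (hε : ¬ IsOfFinOrder ε)
    (hεabs : (∀ w : {w : InfinitePlace K // IsReal w},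
        |(mixedEmbedding K (ε : K)).1 w| ≠ 1) ∧
      (∀ w : {w : InfinitePlace K // IsComplex w},
        ‖(mixedEmbedding K (ε : K)).2 w‖ ≠ 1))
    (β : 𝓞 K)
    (h1 : ∀ ξ ∈ T,
      (∃ γ : 𝓞 K, mixedEmbedding.norm
          (mixedEmbedding K (ε : K) * ξ - mixedEmbedding K (β : K)
            - mixedEmbedding K (γ : K)) < k) ∨
      mixedEmbedding K (ε : K) * ξ - mixedEmbedding K (β : K) ∈ T)
    (h2 : ∀ ξ ∈ T, ∃ γ : 𝓞 K,
      (∃ δ : 𝓞 K, mixedEmbedding.norm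
          (mixedEmbedding K ((ε⁻¹ : (𝓞 K)ˣ) : K) * ξ - mixedEmbedding K (γ : K)
            - mixedEmbedding K (δ : K)) < k) ∨
      mixedEmbedding K ((ε⁻¹ : (𝓞 K)ˣ) : K) * ξ - mixedEmbedding K (γ : K) ∈ T)
    (ξ₀ : mixedEmbedding.mixedSpace K) (hξ₀ : ξ₀ ∈ T)
    (hexc : ∀ γ : 𝓞 K, k ≤ mixedEmbedding.norm (ξ₀ - mixedEmbedding K (γ : K))) :
    ξ₀ = mixedEmbedding K (β : K) / (mixedEmbedding K (ε : K) - 1) :=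
  stmt_3_general K k T hT ε hεabs β h1 h2 ξ₀ hξ₀ hexc
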